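/- arXiv:1901.10039 — 5 statements merged into one kernel-verified Lean document; each statement's English description precedes it below -/
import Mathlib

section
/- Let x : [t₀,∞) → ℝ^K solve x' = Ax with x(t₀) = x₀. Then ‖x(t)‖ ≤ e^{(t−t₀)μ(A)} ‖x₀‖ for all t ≥ t₀, where μ is the logarithmic norm associated to the given induced norm. -/
/-!
Since `x (t + h) = (1 + h • A) (x t) + o(h)`, the increment `‖x (t + h)‖ - ‖x t‖` is at most
`(‖1 + h • A‖ - 1) ‖x t‖ + o(h)`, so the upper right Dini derivative of `‖x‖` is at most
`μ ‖x‖`. Grönwall's inequality for right Dini derivatives then gives the exponential bound.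
-/

open Filter Set Topology

theorem tendsto_sub_const_nhdsGT_zero (t : ℝ) : Tendsto (· - t) (𝓝[>] t) (𝓝[>] 0) :=
  sub_self t ▸ map_subRight_nhdsGT.le

section

variable {E : Type*} [NormedAddCommGroup E] [NormedSpace ℂ E]

theorem inv_mul_norm_add_smul_sub_norm_le (A : E →L[ℂ] E) (v s : E) {h : ℝ} (hh : 0 < h) :
    h⁻¹ * (‖v + h • s‖ - ‖v‖) ≤ ‖s - A v‖ + (‖1 + h • A‖ - 1) / h * ‖v‖ := by
  have hsplit : v + h • s = h • (s - A v) + (1 + h • A) v := by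
    simp only [add_apply, smul_apply, one_apply_eq_self, smul_sub]
    abel
  have hnorm : ‖v + h • s‖ ≤ h * ‖s - A v‖ + ‖1 + h • A‖ * ‖v‖ := by
    calc ‖v + h • s‖ ≤ ‖h • (s - A v)‖ + ‖(1 + h • A) v‖ := hsplit ▸ norm_add_le _ _
      _ ≤ h * ‖s - A v‖ + ‖1 + h • A‖ * ‖v‖ := by
        rw [norm_smul, Real.norm_of_nonneg hh.le]
        gcongr
        exact (1 + h • A).le_opNorm v
  rw [inv_mul_le_iff₀ hh]
  calc ‖v + h • s‖ - ‖v‖ ≤ h * ‖s - A v‖ + (‖1 + h • A‖ - 1) * ‖v‖ := by linarith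
    _ = h * (‖s - A v‖ + (‖1 + h • A‖ - 1) / h * ‖v‖) := by field_simp

theorem eventually_inv_mul_norm_sub_norm_lt (A : E →L[ℂ] E) {x : ℝ → E} {t : ℝ}
    (hx : HasDerivWithinAt x (A (x t)) (Ioi t) t) {μ : ℝ}
    (hμ : Tendsto (fun h : ℝ => (‖(1 : E →L[ℂ] E) + h • A‖ - 1) / h) (𝓝[>] 0) (𝓝 μ))
    {r : ℝ} (hr : μ * ‖x t‖ < r) :
    ∀ᶠ z in 𝓝[>] t, (z - t)⁻¹ * (‖x z‖ - ‖x t‖) < r := by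
  have hslope : Tendsto (slope x t) (𝓝[>] t) (𝓝 (A (x t))) :=
    (hasDerivWithinAt_iff_tendsto_slope' (lt_irrefl t)).1 hx
  have hbound : Tendsto (fun z => ‖slope x t z - A (x t)‖
      + (‖1 + (z - t) • A‖ - 1) / (z - t) * ‖x t‖) (𝓝[>] t) (𝓝 (μ * ‖x t‖)) := by
    simpa using (tendsto_iff_norm_sub_tendsto_zero.1 hslope).add
      ((hμ.comp (tendsto_sub_const_nhdsGT_zero t)).mul_const ‖x t‖)
  filter_upwards [hbound.eventually_lt_const hr, self_mem_nhdsWithin] with z hz htz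
  have hstep := inv_mul_norm_add_smul_sub_norm_le A (x t) (slope x t z) (sub_pos.2 htz)
  rw [add_comm (x t), ← vadd_eq_add, sub_smul_slope_vadd] at hstep
  exact hstep.trans_lt hz

end

theorem stmt_10_general {E : Type*} [NormedAddCommGroup E] [NormedSpace ℂ E]
    (A : E →L[ℂ] E) (t₀ : ℝ) (x₀ : E) (x : ℝ → E)
    (hx : ∀ t : ℝ, HasDerivAt x (A (x t)) t) (hx₀ : x t₀ = x₀) (μ : ℝ)
    (hμ : Filter.Tendsto (fun h : ℝ => (‖(1 : E →L[ℂ] E) + h • A‖ - 1) / h)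
      (nhdsWithin 0 (Set.Ioi 0)) (nhds μ)) :
    ∀ t : ℝ, t₀ ≤ t → ‖x t‖ ≤ Real.exp ((t - t₀) * μ) * ‖x₀‖ := by
  intro t ht
  have hcont : Continuous x := continuous_iff_continuousAt.2 fun s => (hx s).continuousAt
  have hgronwall := le_gronwallBound_of_liminf_deriv_right_le (f := fun s => ‖x s‖) (K := μ)
    (f' := fun s => μ * ‖x s‖) (ε := 0) hcont.norm.continuousOn
    (fun s _ _ hr =>
      (eventually_inv_mul_norm_sub_norm_lt A (hx s).hasDerivWithinAt hμ hr).frequently)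
    (congrArg norm hx₀).le (fun _ _ => by simp) t ⟨ht, le_rfl⟩
  rwa [gronwallBound_ε0, mul_comm, mul_comm μ] at hgronwall

/-- If `x : ℝ → E` solves `x' = A x` with `x t₀ = x₀`, then
`‖x t‖ ≤ exp ((t - t₀) * μ(A)) * ‖x₀‖` for all `t ≥ t₀`, where `μ(A)` is the logarithmic
norm associated to the induced operator norm. -/
theorem stmt_10 {E : Type*} [NormedAddCommGroup E] [NormedSpace ℂ E] [CompleteSpace E]
    (A : E →L[ℂ] E) (t₀ : ℝ) (x₀ : E) (x : ℝ → E)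
    (hx : ∀ t : ℝ, HasDerivAt x (A (x t)) t) (hx₀ : x t₀ = x₀) (μ : ℝ)
    (hμ : Filter.Tendsto (fun h : ℝ => (‖(1 : E →L[ℂ] E) + h • A‖ - 1) / h)
      (nhdsWithin 0 (Set.Ioi 0)) (nhds μ)) :
    ∀ t : ℝ, t₀ ≤ t → ‖x t‖ ≤ Real.exp ((t - t₀) * μ) * ‖x₀‖ :=
  stmt_10_general A t₀ x₀ x hx hx₀ μ hμ
end

section
/- Consider the ODE system v'(t) = Mv(t) + g(v(t)) where M is Metzler and g has a diagonal nonnegative Jacobian. If w₀ := Mv₀ + g(v₀) is componentwise positive, then v'(t) is componentwise positive for all t in the interval of existence; i.e., the solution is componentwise strictly increasing in t. -/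
/-!
Differentiating the equation shows that `w = v'` solves `w' = M w + g'(v) w`. As long as `w > 0`
componentwise, the Metzler sign pattern of `M` and the diagonal nonnegative Jacobian `g'` give
`w_i' ≥ M_ii w_i`. At the first time `τ` at which some component `w_i` would reach `0`, Grönwall's
inequality on `[t₀, τ]` gives `w_i(τ) ≥ w_i(t₀) exp(M_ii (τ - t₀)) > 0`, a contradiction.
-/

open Set Matrix

theorem pos_of_hasDerivWithinAt_ge_mul {f f' : ℝ → ℝ} {a b c : ℝ}
    (hf : ContinuousOn f (Icc a b)) (hf' : ∀ x ∈ Ico a b, HasDerivWithinAt f (f' x) (Ici x) x)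
    (bound : ∀ x ∈ Ico a b, c * f x ≤ f' x) (ha : 0 < f a) : ∀ x ∈ Icc a b, 0 < f x := by
  intro x hx
  -- Grönwall's inequality for `-f`, whose derivative is at most `c * (-f)`.
  have h := le_gronwallBound_of_liminf_deriv_right_le (f := fun x => -f x) (f' := fun x => -f' x)
    (δ := -f a) (K := c) (ε := 0) hf.neg (fun x hx _ hr => (hf' x hx).neg.liminf_right_slope_le hr)
    le_rfl (fun x hx => by linarith [bound x hx]) x hx
  rw [gronwallBound_ε0] at h
  nlinarith [Real.exp_pos (c * (x - a))]

theorem IsClosed.exists_first_mem_Icc {s : Set ℝ} {a b : ℝ} (hs : IsClosed (s ∩ Icc a b))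
    (hb : b ∈ s) (hab : a ≤ b) : ∃ τ ∈ s ∩ Icc a b, ∀ t ∈ Ico a τ, t ∉ s := by
  have hne : (s ∩ Icc a b).Nonempty := ⟨b, hb, hab, le_rfl⟩
  have hbdd : BddBelow (s ∩ Icc a b) := ⟨a, fun t ht => ht.2.1⟩
  refine ⟨sInf (s ∩ Icc a b), hs.csInf_mem hne hbdd, fun t ht hts => ?_⟩
  exact ht.2.not_ge (csInf_le hbdd ⟨hts, ht.1, ht.2.le.trans (hs.csInf_mem hne hbdd).2.2⟩)

theorem pi_pos_of_hasDerivAt_ge_mul {ι : Type*} [Fintype ι] {w w' : ℝ → ι → ℝ} {c : ι → ℝ}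
    {a b : ℝ} (hw : ∀ t ∈ Ico a b, HasDerivAt w (w' t) t)
    (bound : ∀ t ∈ Ico a b, (∀ j, 0 < w t j) → ∀ i, c i * w t i ≤ w' t i)
    (ha : ∀ i, 0 < w a i) : ∀ t ∈ Ico a b, ∀ i, 0 < w t i := by
  by_contra! ⟨t₁, ht₁, i₁, hi₁⟩
  have hsub : Icc a t₁ ⊆ Ico a b := Icc_subset_Ico_right ht₁.2
  have hcont : ContinuousOn w (Icc a t₁) :=
    fun t ht => (hw t (hsub ht)).continuousAt.continuousWithinAt
  have hclosed : IsClosed ((w ⁻¹' {y | ∃ i, y i ≤ 0}) ∩ Icc a t₁) := by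
    rw [inter_comm]
    refine hcont.preimage_isClosed_of_isClosed isClosed_Icc ?_
    simp only [ofPred_exists]
    exact isClosed_iUnion_of_finite fun i => isClosed_le (continuous_apply i) continuous_const
  obtain ⟨τ, ⟨⟨i, hi⟩, hτ⟩, hbefore⟩ := hclosed.exists_first_mem_Icc ⟨i₁, hi₁⟩ ht₁.1
  have hpos : ∀ t ∈ Ico a τ, ∀ j, 0 < w t j := fun t ht => by simpa using hbefore t ht
  have hτsub : Icc a τ ⊆ Ico a b := (Icc_subset_Icc_right hτ.2).trans hsub
  have hwi : ∀ t ∈ Icc a τ, HasDerivAt (fun t => w t i) (w' t i) t :=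
    fun t ht => hasDerivAt_pi.mp (hw t (hτsub ht)) i
  exact hi.not_gt (pos_of_hasDerivWithinAt_ge_mul
    (fun t ht => (hwi t ht).continuousAt.continuousWithinAt)
    (fun t ht => (hwi t (Ico_subset_Icc_self ht)).hasDerivWithinAt)
    (fun t ht => bound t (hτsub (Ico_subset_Icc_self ht)) (hpos t ht) i) (ha i) τ ⟨hτ.1, le_rfl⟩)

theorem Matrix.diag_mul_le_mulVec {ι R : Type*} [Fintype ι] [DecidableEq ι] [Semiring R]
    [PartialOrder R] [IsOrderedRing R]
    {M : Matrix ι ι R} (hM : ∀ i j, i ≠ j → 0 ≤ M i j) {x : ι → R} (hx : 0 ≤ x) (i : ι) :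
    M i i * x i ≤ (M *ᵥ x) i := by
  rw [mulVec, dotProduct, ← Finset.add_sum_erase _ _ (Finset.mem_univ i)]
  exact le_add_of_nonneg_right (Finset.sum_nonneg fun j hj =>
    mul_nonneg (hM i j (Finset.ne_of_mem_erase hj).symm) (hx j))

theorem LinearMap.apply_eq_mul_of_offDiag_eq_zero {ι R : Type*} [Fintype ι] [DecidableEq ι]
    [CommSemiring R] (A : (ι → R) →ₗ[R] (ι → R)) (hA : ∀ i j, i ≠ j → A (Pi.single j 1) i = 0)
    (x : ι → R) (i : ι) :
    A x i = x i * A (Pi.single i 1) i := by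
  have hbasis : ∀ k : ι, (fun j => if k = j then (1 : R) else 0) = Pi.single k 1 :=
    fun k => funext fun j => by rw [← Pi.single_comm, Pi.single_apply]
  rw [LinearMap.pi_apply_eq_sum_univ, Finset.sum_apply, Finset.sum_eq_single i]
  · simp [hbasis]
  · intro j _ hj
    simp [hbasis, hA i j hj.symm]
  · simp

theorem stmt_11_general {n : ℕ} (M : Matrix (Fin n) (Fin n) ℝ)
    (hM : ∀ i j, i ≠ j → 0 ≤ M i j)
    (g : (Fin n → ℝ) → Fin n → ℝ)
    (g' : (Fin n → ℝ) → (Fin n → ℝ) →L[ℝ] (Fin n → ℝ))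
    (hg : ∀ u, HasFDerivAt g (g' u) u)
    (hdiagJ : ∀ u i j, i ≠ j → g' u (Pi.single j 1) i = 0)
    (hnonnegJ : ∀ u i, 0 ≤ g' u (Pi.single i 1) i)
    (t₀ T : ℝ) (v₀ : Fin n → ℝ) (v : ℝ → Fin n → ℝ)
    (hv : ∀ t ∈ Set.Ico t₀ T, HasDerivAt v (M.mulVec (v t) + g (v t)) t)
    (hv₀ : v t₀ = v₀)
    (hw₀ : ∀ i, 0 < (M.mulVec v₀ + g v₀) i) :
    ∀ t ∈ Set.Ico t₀ T, ∀ i, 0 < (M.mulVec (v t) + g (v t)) i := by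
  set w : ℝ → Fin n → ℝ := fun t => M *ᵥ v t + g (v t)
  have hw : ∀ t ∈ Ico t₀ T, HasDerivAt w (M *ᵥ w t + g' (v t) (w t)) t := fun t ht =>
    (M.mulVecLin.toContinuousLinearMap.hasFDerivAt.comp_hasDerivAt t (hv t ht)).add
      ((hg (v t)).comp_hasDerivAt t (hv t ht))
  refine pi_pos_of_hasDerivAt_ge_mul (c := fun i => M i i) hw (fun t _ hpos i => ?_)
    (by simpa [w, hv₀] using hw₀)
  have hMw : M i i * w t i ≤ (M *ᵥ w t) i := M.diag_mul_le_mulVec hM (fun j => (hpos j).le) i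
  have hgw : 0 ≤ g' (v t) (w t) i := by
    rw [← ContinuousLinearMap.coe_coe,
      LinearMap.apply_eq_mul_of_offDiag_eq_zero _ (hdiagJ (v t))]
    exact mul_nonneg (hpos i).le (hnonnegJ (v t) i)
  show M i i * w t i ≤ (M *ᵥ w t) i + g' (v t) (w t) i
  linarith

/-- For `v' = M v + g(v)` with `M` Metzler and `g` having a diagonal nonnegative Jacobian,
if `M v₀ + g v₀ > 0` componentwise, then `v'(t) = M v(t) + g(v(t))` stays componentwise
positive on the interval of existence, i.e. the solution is componentwise strictly
increasing in `t`. -/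
theorem stmt_11 {n : ℕ} (M : Matrix (Fin n) (Fin n) ℝ)
    (hM : ∀ i j, i ≠ j → 0 ≤ M i j)
    (g : (Fin n → ℝ) → Fin n → ℝ)
    (g' : (Fin n → ℝ) → (Fin n → ℝ) →L[ℝ] (Fin n → ℝ))
    (hg : ∀ u, HasFDerivAt g (g' u) u) (hg'cont : Continuous g')
    (hdiagJ : ∀ u i j, i ≠ j → g' u (Pi.single j 1) i = 0)
    (hnonnegJ : ∀ u i, 0 ≤ g' u (Pi.single i 1) i)
    (t₀ T : ℝ) (v₀ : Fin n → ℝ) (v : ℝ → Fin n → ℝ)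
    (hv : ∀ t ∈ Set.Ico t₀ T, HasDerivAt v (M.mulVec (v t) + g (v t)) t)
    (hv₀ : v t₀ = v₀)
    (hw₀ : ∀ i, 0 < (M.mulVec v₀ + g v₀) i) :
    ∀ t ∈ Set.Ico t₀ T, ∀ i, 0 < (M.mulVec (v t) + g (v t)) i :=
  stmt_11_general M hM g g' hg hdiagJ hnonnegJ t₀ T v₀ v hv hv₀ hw₀
end

section
/- For the nonuniform three-point second-difference formula on a grid generated as the image of a uniform grid under a smooth map, the local truncation error in approximating u'' is O(h²), where h is the maximal local step size. -/
/-!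
Expanding `u` to fourth order about the middle node shows that the three-point formula has error
`(h₁ - h₂) / 3 · u'''(x_i) + O(max(h₁, h₂)²)`. On the grid `x_j = g(-1 + j k)` the difference
`h₁ - h₂` of consecutive steps is minus a second difference of `g`, hence `O(k²)`, while the mean
value theorem and `g' ≥ δ` give `h ≥ δ k`; together `h₁ - h₂ = O(h²)`.
-/

open Set
open scoped Nat

theorem taylor_mean_remainder_lagrange_of_contDiff {f : ℝ → ℝ} {n : ℕ}
    (hf : ContDiff ℝ (n + 1) f) {x₀ x : ℝ} (hx : x₀ ≠ x) :
    ∃ ξ ∈ uIoo x₀ x, f x = ∑ j ∈ Finset.range (n + 1), iteratedDeriv j f x₀ * (x - x₀) ^ j / j ! +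
      iteratedDeriv (n + 1) f ξ * (x - x₀) ^ (n + 1) / (n + 1)! := by
  obtain ⟨ξ, hξ, hrem⟩ := taylor_mean_remainder_lagrange_iteratedDeriv hx hf.contDiffOn
  refine ⟨ξ, hξ, ?_⟩
  have hderiv : ∀ j ≤ n, iteratedDerivWithin j f (uIcc x₀ x) x₀ = iteratedDeriv j f x₀ :=
    fun j hj => iteratedDerivWithin_eq_iteratedDeriv (uniqueDiffOn_uIcc hx)
      (hf.contDiffAt.of_le (by exact_mod_cast Nat.le_succ_of_le hj)) left_mem_uIcc
  rw [taylor_within_apply, Finset.sum_congr rfl fun j hj => by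
    rw [hderiv j (Nat.lt_succ_iff.mp (Finset.mem_range.mp hj))]] at hrem
  simp only [smul_eq_mul] at hrem
  rw [← sub_eq_iff_eq_add', ← hrem]
  congr 1
  exact Finset.sum_congr rfl fun j _ => by ring

noncomputable def nonuniformSecondDiff (u : ℝ → ℝ) (a b c : ℝ) : ℝ :=
  2 * u a / ((b - a) * ((b - a) + (c - b))) - 2 * u b / ((b - a) * (c - b)) +
    2 * u c / ((c - b) * ((b - a) + (c - b)))

theorem exists_iteratedDeriv_two_sub_nonuniformSecondDiff_eq {u : ℝ → ℝ} (hu : ContDiff ℝ 4 u)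
    {a b c : ℝ} (hab : a < b) (hbc : b < c) :
    ∃ ξ₁ ∈ Ioo a b, ∃ ξ₂ ∈ Ioo b c,
      iteratedDeriv 2 u b - nonuniformSecondDiff u a b c =
        ((b - a) - (c - b)) / 3 * iteratedDeriv 3 u b
          - iteratedDeriv 4 u ξ₁ * (b - a) ^ 3 / (12 * (c - a))
          - iteratedDeriv 4 u ξ₂ * (c - b) ^ 3 / (12 * (c - a)) := by
  obtain ⟨ξ₁, hξ₁, hua⟩ := taylor_mean_remainder_lagrange_of_contDiff (n := 3) hu hab.ne'
  obtain ⟨ξ₂, hξ₂, huc⟩ := taylor_mean_remainder_lagrange_of_contDiff (n := 3) hu hbc.ne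
  rw [uIoo_of_ge hab.le] at hξ₁
  rw [uIoo_of_le hbc.le] at hξ₂
  refine ⟨ξ₁, hξ₁, ξ₂, hξ₂, ?_⟩
  have hba : b - a ≠ 0 := sub_ne_zero.mpr hab.ne'
  have hcb : c - b ≠ 0 := sub_ne_zero.mpr hbc.ne'
  have hca : c - a ≠ 0 := sub_ne_zero.mpr (hab.trans hbc).ne'
  simp only [Finset.sum_range_succ, Finset.sum_range_zero, iteratedDeriv_zero] at hua huc
  norm_num [Nat.factorial] at hua huc
  rw [nonuniformSecondDiff, show b - a + (c - b) = c - a by ring, hua, huc]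
  field_simp
  ring

theorem abs_iteratedDeriv_two_sub_nonuniformSecondDiff_le {u : ℝ → ℝ} (hu : ContDiff ℝ 4 u)
    {a b c B₃ B₄ : ℝ} (hab : a < b) (hbc : b < c) (hB₃ : |iteratedDeriv 3 u b| ≤ B₃)
    (hB₄ : ∀ y ∈ Icc a c, |iteratedDeriv 4 u y| ≤ B₄) :
    |iteratedDeriv 2 u b - nonuniformSecondDiff u a b c| ≤
      B₃ / 3 * |(b - a) - (c - b)| + B₄ / 12 * max (b - a) (c - b) ^ 2 := by
  obtain ⟨ξ₁, hξ₁, ξ₂, hξ₂, herr⟩ := exists_iteratedDeriv_two_sub_nonuniformSecondDiff_eq hu hab hbc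
  rw [herr]
  set M := max (b - a) (c - b)
  have hE₁ := hB₄ ξ₁ ⟨hξ₁.1.le, hξ₁.2.le.trans hbc.le⟩
  have hE₂ := hB₄ ξ₂ ⟨hab.le.trans hξ₂.1.le, hξ₂.2.le⟩
  have hB₄_nonneg : 0 ≤ B₄ := (abs_nonneg _).trans hE₁
  have hca : 0 < 12 * (c - a) := by linarith
  have cube_le {h : ℝ} (h0 : 0 ≤ h) (hM : h ≤ M) : h ^ 3 ≤ M ^ 2 * h := by
    rw [pow_succ]
    exact mul_le_mul_of_nonneg_right (pow_le_pow_left₀ h0 hM 2) h0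
  have hleading : |((b - a) - (c - b)) / 3 * iteratedDeriv 3 u b| ≤
      B₃ / 3 * |(b - a) - (c - b)| := by
    rw [abs_mul, abs_div, abs_of_pos (three_pos : (0 : ℝ) < 3)]
    nlinarith [abs_nonneg ((b - a) - (c - b))]
  have hremainder : |iteratedDeriv 4 u ξ₁ * (b - a) ^ 3 / (12 * (c - a))| +
      |iteratedDeriv 4 u ξ₂ * (c - b) ^ 3 / (12 * (c - a))| ≤ B₄ / 12 * M ^ 2 := by
    rw [abs_div, abs_div, abs_of_pos hca, abs_mul, abs_mul, abs_of_pos (pow_pos (sub_pos.2 hab) 3),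
      abs_of_pos (pow_pos (sub_pos.2 hbc) 3), ← add_div, div_le_iff₀ hca]
    calc |iteratedDeriv 4 u ξ₁| * (b - a) ^ 3 + |iteratedDeriv 4 u ξ₂| * (c - b) ^ 3
        ≤ B₄ * (M ^ 2 * (b - a)) + B₄ * (M ^ 2 * (c - b)) := by
          gcongr
          · exact cube_le (sub_pos.2 hab).le (le_max_left _ _)
          · exact cube_le (sub_pos.2 hbc).le (le_max_right _ _)
      _ = B₄ / 12 * M ^ 2 * (12 * (c - a)) := by ring
  calc _ ≤ |((b - a) - (c - b)) / 3 * iteratedDeriv 3 u b|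
        + |iteratedDeriv 4 u ξ₁ * (b - a) ^ 3 / (12 * (c - a))|
        + |iteratedDeriv 4 u ξ₂ * (c - b) ^ 3 / (12 * (c - a))| :=
        (abs_sub _ _).trans (by gcongr; exact abs_sub _ _)
    _ ≤ _ := by linarith

theorem abs_sub_two_mul_add_le {g : ℝ → ℝ} (hg : ContDiff ℝ 2 g) {t k B : ℝ} (hk : 0 < k)
    (hB : ∀ y ∈ Icc (t - k) (t + k), |iteratedDeriv 2 g y| ≤ B) :
    |g (t - k) - 2 * g t + g (t + k)| ≤ B * k ^ 2 := by
  obtain ⟨η₁, hη₁, hg₁⟩ := taylor_mean_remainder_lagrange_of_contDiff (n := 1) hg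
    (show t ≠ t - k by linarith)
  obtain ⟨η₂, hη₂, hg₂⟩ := taylor_mean_remainder_lagrange_of_contDiff (n := 1) hg
    (show t ≠ t + k by linarith)
  rw [uIoo_of_ge (by linarith)] at hη₁
  rw [uIoo_of_le (by linarith)] at hη₂
  have hE₁ := hB η₁ ⟨hη₁.1.le, by linarith [hη₁.2]⟩
  have hE₂ := hB η₂ ⟨by linarith [hη₂.1], hη₂.2.le⟩
  simp only [Finset.sum_range_succ, Finset.sum_range_zero] at hg₁ hg₂
  norm_num at hg₁ hg₂
  have hsecond : g (t - k) - 2 * g t + g (t + k) =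
      (iteratedDeriv 2 g η₁ + iteratedDeriv 2 g η₂) / 2 * k ^ 2 := by
    rw [hg₁, hg₂]; ring
  rw [hsecond, abs_mul, abs_of_nonneg (sq_nonneg k), abs_div, abs_two]
  gcongr
  linarith [abs_add_le (iteratedDeriv 2 g η₁) (iteratedDeriv 2 g η₂)]

theorem abs_iteratedDeriv_two_sub_nonuniformSecondDiff_comp_le {g u : ℝ → ℝ}
    {p q δ B₂ B₃ B₄ t k : ℝ} (hg : ContDiff ℝ 2 g) (hg' : ∀ x ∈ Icc p q, δ ≤ deriv g x)
    (hδ : 0 < δ) (hu : ContDiff ℝ 4 u) (hB₂ : ∀ x ∈ Icc p q, |iteratedDeriv 2 g x| ≤ B₂)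
    (hB₃ : ∀ y ∈ Icc (g p) (g q), |iteratedDeriv 3 u y| ≤ B₃)
    (hB₄ : ∀ y ∈ Icc (g p) (g q), |iteratedDeriv 4 u y| ≤ B₄)
    (hk : 0 < k) (hp : p ≤ t - k) (hq : t + k ≤ q) :
    |iteratedDeriv 2 u (g t) - nonuniformSecondDiff u (g (t - k)) (g t) (g (t + k))| ≤
      (B₂ * B₃ / (3 * δ ^ 2) + B₄ / 12) * max (g t - g (t - k)) (g (t + k) - g t) ^ 2 := by
  have hmvt : ∀ x ∈ Icc p q, ∀ y ∈ Icc p q, x ≤ y → δ * (y - x) ≤ g y - g x :=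
    (convex_Icc p q).mul_sub_le_image_sub_of_le_deriv hg.continuous.continuousOn
      (hg.differentiable two_ne_zero).differentiableOn fun x hx => hg' x (interior_subset hx)
  have hstep₁ : δ * k ≤ g t - g (t - k) := by
    simpa using hmvt (t - k) ⟨hp, by linarith⟩ t ⟨by linarith, by linarith⟩ (by linarith)
  have hstep₂ : δ * k ≤ g (t + k) - g t := by
    simpa using hmvt t ⟨by linarith, by linarith⟩ (t + k) ⟨by linarith, hq⟩ (by linarith)
  have hleft : g p ≤ g (t - k) := by
    nlinarith [hmvt p ⟨le_rfl, by linarith⟩ (t - k) ⟨hp, by linarith⟩ hp]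
  have hright : g (t + k) ≤ g q := by
    nlinarith [hmvt (t + k) ⟨by linarith, hq⟩ q ⟨by linarith, le_rfl⟩ hq]
  have hδk : 0 < δ * k := mul_pos hδ hk
  set M := max (g t - g (t - k)) (g (t + k) - g t)
  have hk_sq : k ^ 2 ≤ M ^ 2 / δ ^ 2 := by
    rw [le_div_iff₀ (by positivity), ← mul_pow, mul_comm]
    exact pow_le_pow_left₀ hδk.le (hstep₁.trans (le_max_left _ _)) 2
  have hsteps : |(g t - g (t - k)) - (g (t + k) - g t)| ≤ B₂ * (M ^ 2 / δ ^ 2) := by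
    have hsecond := abs_sub_two_mul_add_le hg hk fun y hy =>
      hB₂ y ⟨hp.trans hy.1, hy.2.trans hq⟩
    rw [← abs_neg, show -((g t - g (t - k)) - (g (t + k) - g t)) =
      g (t - k) - 2 * g t + g (t + k) by ring]
    exact hsecond.trans (mul_le_mul_of_nonneg_left hk_sq ((abs_nonneg _).trans
      (hB₂ t ⟨by linarith, by linarith⟩)))
  have hB₃t := hB₃ (g t) ⟨by linarith, by linarith⟩
  calc _ ≤ B₃ / 3 * |(g t - g (t - k)) - (g (t + k) - g t)| + B₄ / 12 * M ^ 2 :=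
        abs_iteratedDeriv_two_sub_nonuniformSecondDiff_le hu (by linarith) (by linarith) hB₃t
          fun y hy => hB₄ y ⟨hleft.trans hy.1, hy.2.trans hright⟩
    _ ≤ B₃ / 3 * (B₂ * (M ^ 2 / δ ^ 2)) + B₄ / 12 * M ^ 2 := by
        gcongr
        exact div_nonneg ((abs_nonneg _).trans hB₃t) zero_le_three
    _ = _ := by field_simp

theorem Continuous.exists_forall_abs_le_on_Icc {f : ℝ → ℝ} (hf : Continuous f) (a b : ℝ) :
    ∃ B, ∀ x ∈ Icc a b, |f x| ≤ B :=
  isCompact_Icc.exists_bound_of_continuousOn hf.continuousOn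

/-- For a nonuniform grid generated as the image of a uniform grid under a smooth map with
derivative bounded away from zero, the three-point second-difference formula approximates
`u''` with local truncation error `O(h²)`, `h` being the maximal local step size. -/
theorem stmt_12 (g : ℝ → ℝ) (hg : ContDiff ℝ 3 g) (δ : ℝ) (hδ : 0 < δ)
    (hg' : ∀ x ∈ Set.Icc (-1 : ℝ) 1, δ ≤ deriv g x)
    (u : ℝ → ℝ) (hu : ContDiff ℝ 4 u) :
    ∃ C > 0, ∀ N : ℕ, ∀ i : ℕ, 1 ≤ i → i ≤ N →
      (fun k : ℝ =>
        (fun x : ℕ → ℝ =>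
          (fun h : ℕ → ℝ =>
            |iteratedDeriv 2 u (x i) -
              (2 * u (x (i - 1)) / (h (i - 1) * (h (i - 1) + h i)) -
                2 * u (x i) / (h (i - 1) * h i) +
                2 * u (x (i + 1)) / (h i * (h (i - 1) + h i)))| ≤
              C * max (h (i - 1)) (h i) ^ 2)
          (fun j => x (j + 1) - x j))
        (fun j : ℕ => g (-1 + j * k)))
      (2 / ((N : ℝ) + 1)) := by
  have hg₂ : ContDiff ℝ 2 g := hg.of_le (by norm_num)
  obtain ⟨B₂, hB₂⟩ := (hg.continuous_iteratedDeriv 2 (by norm_num)).exists_forall_abs_le_on_Icc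
    (-1) 1
  obtain ⟨B₃, hB₃⟩ := (hu.continuous_iteratedDeriv 3 (by norm_num)).exists_forall_abs_le_on_Icc
    (g (-1)) (g 1)
  obtain ⟨B₄, hB₄⟩ := (hu.continuous_iteratedDeriv 4 le_rfl).exists_forall_abs_le_on_Icc
    (g (-1)) (g 1)
  refine ⟨max (B₂ * B₃ / (3 * δ ^ 2) + B₄ / 12) 1, lt_max_of_lt_right one_pos, ?_⟩
  intro N i hi hiN
  obtain ⟨j, rfl⟩ : ∃ j, i = j + 1 := ⟨i - 1, by omega⟩
  set k : ℝ := 2 / ((N : ℝ) + 1)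
  have hk : 0 < k := by positivity
  have hNk : ((N : ℝ) + 1) * k = 2 := by simp only [k]; field_simp
  have hjN : (j : ℝ) + 1 ≤ N := by exact_mod_cast hiN
  simp only [Nat.add_sub_cancel]
  rw [show (-1 : ℝ) + ↑j * k = -1 + ↑(j + 1) * k - k by push_cast; ring,
    show (-1 : ℝ) + ↑(j + 1 + 1) * k = -1 + ↑(j + 1) * k + k by push_cast; ring]
  refine (abs_iteratedDeriv_two_sub_nonuniformSecondDiff_comp_le hg₂ hg' hδ hu hB₂ hB₃ hB₄ hk
    ?_ ?_).trans ?_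
  · push_cast; nlinarith
  · push_cast; nlinarith
  · gcongr
    exact le_max_left _ _
end

section
/- Monotonicity of the splitting scheme: suppose Φ_k and M^{-1}(Φ_k − I) are entrywise positive matrices, g is componentwise monotone (v ≤ w implies g(v) ≤ g(w)) and positive, θ ∈ [0,1], and the iteration v_{k+1} = Φ_k v_k + M^{-1}(Φ_k − I)[θ g(v_k) + (1−θ) g(v_{k+1})] holds with v_k ≤ v_{k+1}. If M v_k + g(v_k) > 0 componentwise, then M v_{k+1} + g(v_{k+1}) > 0 and v_{k+1} > v_k componentwise. -/
lemma mulVec_pos_aux {n : ℕ} (B : Matrix (Fin n) (Fin n) ℝ)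
    (hB : ∀ i j, 0 < B i j) (x : Fin n → ℝ) (hx : ∀ j, 0 < x j) (i : Fin n) :
    0 < B.mulVec x i := by
  have : Nonempty (Fin n) := ⟨i⟩
  unfold Matrix.mulVec dotProduct
  exact Finset.sum_pos (fun j _ => mul_pos (hB i j) (hx j)) Finset.univ_nonempty

/-- Monotonicity of the splitting scheme: if `Φ` and `M⁻¹(Φ − I)` are entrywise positive,
`g` is componentwise monotone and positive, `M` commutes with `Φ`, and the implicit weighted
iteration holds with `v_k ≤ v_{k+1}`, then `M v_k + g(v_k) > 0` implies
`M v_{k+1} + g(v_{k+1}) > 0` and `v_{k+1} > v_k` componentwise. -/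
theorem stmt_17 {n : ℕ} (M Φ : Matrix (Fin n) (Fin n) ℝ) (hMinv : IsUnit M.det)
    (hcomm : M * Φ = Φ * M)
    (hΦ : ∀ i j, 0 < Φ i j)
    (hMΦ : ∀ i j, 0 < (M⁻¹ * (Φ - 1)) i j)
    (g : (Fin n → ℝ) → Fin n → ℝ)
    (hgpos : ∀ v : Fin n → ℝ, ∀ i, 0 < g v i)
    (hgmono : ∀ v w : Fin n → ℝ, (∀ i, v i ≤ w i) → ∀ i, g v i ≤ g w i)
    (θ : ℝ) (hθ : θ ∈ Set.Icc (0 : ℝ) 1)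
    (vk vk1 : Fin n → ℝ) (hle : ∀ i, vk i ≤ vk1 i)
    (hiter : vk1 = Φ.mulVec vk +
      (M⁻¹ * (Φ - 1)).mulVec (θ • g vk + (1 - θ) • g vk1))
    (hpos : ∀ i, 0 < (M.mulVec vk + g vk) i) :
    (∀ i, 0 < (M.mulVec vk1 + g vk1) i) ∧ (∀ i, vk i < vk1 i) := by
  obtain ⟨hθ0, hθ1⟩ := hθ
  set A : Matrix (Fin n) (Fin n) ℝ := M⁻¹ * (Φ - 1) with hA
  set F : Fin n → ℝ := θ • g vk + (1 - θ) • g vk1 with hF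
  have hg : ∀ i, g vk i ≤ g vk1 i := hgmono vk vk1 hle
  have hFge : ∀ i, g vk i ≤ F i := by
    intro i
    simp only [hF, Pi.add_apply, Pi.smul_apply, smul_eq_mul]
    nlinarith [hg i]
  have hFle : ∀ i, F i ≤ g vk1 i := by
    intro i
    simp only [hF, Pi.add_apply, Pi.smul_apply, smul_eq_mul]
    nlinarith [hg i]
  have hMvkF : ∀ i, 0 < (M.mulVec vk + F) i := by
    intro i
    have := hpos i
    simp only [Pi.add_apply] at this ⊢
    linarith [hFge i]
  have hMMinv : M * M⁻¹ = 1 := Matrix.mul_nonsing_inv M hMinv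
  have hMinvM : M⁻¹ * M = 1 := Matrix.nonsing_inv_mul M hMinv
  have hMA : M * A = Φ - 1 := by
    rw [hA, ← Matrix.mul_assoc, hMMinv, Matrix.one_mul]
  have hAM : A * M = Φ - 1 := by
    have hcomm' : (Φ - 1) * M = M * (Φ - 1) := by
      simp [Matrix.sub_mul, Matrix.mul_sub, hcomm]
    rw [hA, Matrix.mul_assoc, hcomm', ← Matrix.mul_assoc, hMinvM, Matrix.one_mul]
  -- key identity: M vk1 + F = Φ (M vk + F)
  have hkey : M.mulVec vk1 + F = Φ.mulVec (M.mulVec vk + F) := by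
    rw [hiter, Matrix.mulVec_add]
    have e1 : M.mulVec (Φ.mulVec vk) = Φ.mulVec (M.mulVec vk) := by
      rw [Matrix.mulVec_mulVec, Matrix.mulVec_mulVec, hcomm]
    have e2 : M.mulVec (A.mulVec F) = Φ.mulVec F - F := by
      rw [Matrix.mulVec_mulVec, hMA, Matrix.sub_mulVec, Matrix.one_mulVec]
    have e3 : Φ.mulVec (M.mulVec vk + F) = Φ.mulVec (M.mulVec vk) + Φ.mulVec F :=
      Matrix.mulVec_add ..
    rw [e1, e2, e3]
    abel
  have hkeypos : ∀ i, 0 < (M.mulVec vk1 + F) i := by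
    intro i
    rw [hkey]
    exact mulVec_pos_aux Φ hΦ _ hMvkF i
  have hdiff : vk1 - vk = A.mulVec (M.mulVec vk + F) := by
    rw [Matrix.mulVec_add, Matrix.mulVec_mulVec, hAM, Matrix.sub_mulVec, Matrix.one_mulVec]
    rw [hiter]
    abel
  constructor
  · intro i
    have h1 := hkeypos i
    simp only [Pi.add_apply] at h1 ⊢
    linarith [hFle i]
  · intro i
    have h2 : 0 < A.mulVec (M.mulVec vk + F) i := mulVec_pos_aux A hMΦ _ hMvkF i
    rw [← hdiff] at h2
    simp only [Pi.sub_apply] at h2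
    linarith
end

section
/- Positivity of the split propagator increment: let M = M_x + M_y with M_x, M_y Metzler and M invertible with ‖M^{-1}‖_∞ ≤ C, and let Φ(τ) = e^{(τ/2)M_x} e^{τ M_y} e^{(τ/2)M_x} with ‖e^{tM_x}‖_∞ ≤ 1 and ‖e^{tM_y}‖_∞ ≤ 1 for t ≥ 0. Then M^{-1}(Φ(τ) − I) = ∫₀^τ E₁(s)E₂(s)E₁(s) ds + R(τ), where E₁(s) = e^{(s/2)M_x}, E₂(s) = e^{sM_y}, the integral term is entrywise nonnegative, and ‖R(τ)‖_∞ ≤ (C τ²/2)‖[M_x, M_y]‖_∞. -/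
open NormedSpace

attribute [local instance] Matrix.linftyOpNormedAddCommGroup Matrix.linftyOpNormedRing
  Matrix.linftyOpNormedAlgebra

/-!
Write `Φ` for the Strang product of `X` and `Y`. Differentiating, `Φ' = (X + Y) Φ + D` where the
defect `D(s)` is built from the commutators `[e^{sY}, X]` and `[e^{(s/2)X}, Y]`. By Duhamel's
formula `[e^{tA}, B] = ∫₀ᵗ e^{(t-u)A} [A, B] e^{uA} du`, so contractivity of the semigroups gives
`‖D(s)‖ ≤ s ‖[X, Y]‖`. Integrating `Φ'` and multiplying by `L = (X + Y)⁻¹` yields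
`L (Φ(τ) - 1) = ∫₀^τ Φ + ∫₀^τ L D`, and the last term has norm at most `‖L‖ τ² ‖[X, Y]‖ / 2`.
For Metzler `X`, `Y` the integrand `Φ` is entrywise nonnegative: adding a large multiple of the
identity makes a Metzler matrix nonnegative and only rescales its exponential by a positive factor.
-/

open MeasureTheory intervalIntegral

section StrangSplitting

variable {𝔸 : Type*} [NormedRing 𝔸] [NormedAlgebra ℝ 𝔸] (X Y : 𝔸)

noncomputable def strangProduct (s : ℝ) : 𝔸 :=
  exp ((s / 2) • X) * exp (s • Y) * exp ((s / 2) • X)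

noncomputable def strangDefect (s : ℝ) : 𝔸 :=
  (2⁻¹ : ℝ) • (strangProduct X Y s * X - X * strangProduct X Y s) +
    (exp ((s / 2) • X) * Y - Y * exp ((s / 2) • X)) * (exp (s • Y) * exp ((s / 2) • X))

theorem strangProduct_zero : strangProduct X Y 0 = 1 := by
  simp [strangProduct]

variable [CompleteSpace 𝔸]

theorem continuous_exp_smul (A : 𝔸) : Continuous fun u : ℝ => exp (u • A) :=
  continuous_iff_continuousAt.2 fun u => (hasDerivAt_exp_smul_const A u).continuousAt

theorem exp_smul_mul_sub_mul_exp_smul_eq_integral (A B : 𝔸) (t : ℝ) :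
    exp (t • A) * B - B * exp (t • A) =
      ∫ u in (0 : ℝ)..t, exp ((t - u) • A) * ((A * B - B * A) * exp (u • A)) := by
  set g : ℝ → 𝔸 := fun u => -(exp ((t - u) • A) * (B * exp (u • A)))
  have hderiv (u : ℝ) :
      HasDerivAt g (exp ((t - u) • A) * ((A * B - B * A) * exp (u • A))) u := by
    have hleft : HasDerivAt (fun u : ℝ => exp ((t - u) • A)) (-(exp ((t - u) • A) * A)) u := by
      have := (hasDerivAt_exp_smul_const A (t - u)).scomp u ((hasDerivAt_id u).const_sub t)
      rw [neg_one_smul] at this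
      exact this
    have hright : HasDerivAt (fun u : ℝ => B * exp (u • A)) (B * (exp (u • A) * A)) u :=
      (hasDerivAt_exp_smul_const A u).const_mul B
    have hcomm : exp (u • A) * A = A * exp (u • A) :=
      (((Commute.refl A).smul_right u).exp_right).eq.symm
    refine (hleft.mul hright).neg.congr_deriv ?_
    rw [hcomm]
    noncomm_ring
  have hcont : Continuous fun u : ℝ => exp ((t - u) • A) * ((A * B - B * A) * exp (u • A)) := by
    have hexp := continuous_exp_smul A
    exact (hexp.comp (continuous_const.sub continuous_id)).mul (continuous_const.mul hexp)
  rw [integral_eq_sub_of_hasDerivAt (fun u _ => hderiv u) (hcont.intervalIntegrable 0 t)]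
  simp only [sub_self, zero_smul, exp_zero, one_mul, sub_zero, mul_one, sub_neg_eq_add, g]
  abel

theorem norm_exp_smul_mul_sub_mul_exp_smul_le {A : 𝔸} (hA : ∀ u : ℝ, 0 ≤ u → ‖exp (u • A)‖ ≤ 1)
    (B : 𝔸) {t : ℝ} (ht : 0 ≤ t) :
    ‖exp (t • A) * B - B * exp (t • A)‖ ≤ t * ‖A * B - B * A‖ := by
  rw [exp_smul_mul_sub_mul_exp_smul_eq_integral, mul_comm t]
  refine (intervalIntegral.norm_integral_le_of_norm_le_const fun u hu => ?_).trans_eq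
    (by rw [sub_zero, abs_of_nonneg ht])
  rw [Set.uIoc_of_le ht] at hu
  calc ‖exp ((t - u) • A) * ((A * B - B * A) * exp (u • A))‖
      ≤ ‖exp ((t - u) • A)‖ * (‖A * B - B * A‖ * ‖exp (u • A)‖) :=
        (norm_mul_le _ _).trans (by gcongr; exact norm_mul_le _ _)
    _ ≤ 1 * (‖A * B - B * A‖ * 1) := by
        gcongr
        exacts [hA _ (sub_nonneg.2 hu.2), hA _ hu.1.le]
    _ = ‖A * B - B * A‖ := by ring

theorem continuous_strangProduct : Continuous (strangProduct X Y) := by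
  have hX := (continuous_exp_smul X).comp (continuous_id.div_const 2)
  exact (hX.mul (continuous_exp_smul Y)).mul hX

theorem continuous_strangDefect : Continuous (strangDefect X Y) := by
  have hX := (continuous_exp_smul X).comp (continuous_id.div_const 2)
  have hΦ := continuous_strangProduct X Y
  exact (((hΦ.mul continuous_const).sub (continuous_const.mul hΦ)).const_smul _).add
    (((hX.mul continuous_const).sub (continuous_const.mul hX)).mul
      ((continuous_exp_smul Y).mul hX))

theorem hasDerivAt_strangProduct (s : ℝ) :
    HasDerivAt (strangProduct X Y) ((X + Y) * strangProduct X Y s + strangDefect X Y s) s := by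
  have hX :
      HasDerivAt (fun s : ℝ => exp ((s / 2) • X)) ((2⁻¹ : ℝ) • (X * exp ((s / 2) • X))) s := by
    have := (hasDerivAt_exp_smul_const' X (s / 2)).scomp s ((hasDerivAt_id s).div_const 2)
    rw [one_div] at this
    exact this
  have hY : HasDerivAt (fun s : ℝ => exp (s • Y)) (Y * exp (s • Y)) s :=
    hasDerivAt_exp_smul_const' Y s
  have hcomm : exp ((s / 2) • X) * X = X * exp ((s / 2) • X) :=
    (((Commute.refl X).smul_right (s / 2)).exp_right).eq.symm
  refine ((hX.mul hY).mul hX).congr_deriv ?_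
  simp only [strangDefect, strangProduct, Pi.mul_apply, add_mul, sub_mul, smul_mul_assoc,
    mul_smul_comm, mul_assoc, hcomm]
  module

theorem norm_strangDefect_le (hX : ∀ t : ℝ, 0 ≤ t → ‖exp (t • X)‖ ≤ 1)
    (hY : ∀ t : ℝ, 0 ≤ t → ‖exp (t • Y)‖ ≤ 1) {s : ℝ} (hs : 0 ≤ s) :
    ‖strangDefect X Y s‖ ≤ s * ‖X * Y - Y * X‖ := by
  rw [strangDefect, strangProduct]
  set P := exp ((s / 2) • X)
  set Q := exp (s • Y)
  have hP : ‖P‖ ≤ 1 := hX _ (by positivity)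
  have hQ : ‖Q‖ ≤ 1 := hY s hs
  have hPX : P * X = X * P := (((Commute.refl X).smul_right (s / 2)).exp_right).eq.symm
  have hXP (Z : 𝔸) : X * (P * Z) = P * (X * Z) := by rw [← mul_assoc, ← hPX, mul_assoc]
  have hcommX : P * Q * P * X - X * (P * Q * P) = P * ((Q * X - X * Q) * P) := by
    simp only [mul_sub, sub_mul, mul_assoc, hPX, hXP]
  have hQX : ‖Q * X - X * Q‖ ≤ s * ‖X * Y - Y * X‖ := by
    simpa only [norm_sub_rev (Y * X)] using norm_exp_smul_mul_sub_mul_exp_smul_le hY X hs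
  have hPY : ‖P * Y - Y * P‖ ≤ s / 2 * ‖X * Y - Y * X‖ :=
    norm_exp_smul_mul_sub_mul_exp_smul_le hX Y (by positivity)
  calc ‖(2⁻¹ : ℝ) • (P * Q * P * X - X * (P * Q * P)) + (P * Y - Y * P) * (Q * P)‖
      ≤ 2⁻¹ * ‖P * ((Q * X - X * Q) * P)‖ + ‖P * Y - Y * P‖ * ‖Q * P‖ := by
        rw [hcommX]
        refine (norm_add_le _ _).trans (add_le_add ?_ (norm_mul_le _ _))
        rw [norm_smul, norm_inv, Real.norm_two]
    _ ≤ 2⁻¹ * (1 * ((s * ‖X * Y - Y * X‖) * 1)) + s / 2 * ‖X * Y - Y * X‖ * (1 * 1) := by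
        gcongr
        · exact norm_mul_le_of_le hP (norm_mul_le_of_le hQX hP)
        · exact norm_mul_le_of_le hQ hP
    _ = s * ‖X * Y - Y * X‖ := by ring

theorem mul_strangProduct_sub_one {L : 𝔸} (hL : L * (X + Y) = 1) (τ : ℝ) :
    L * (strangProduct X Y τ - 1) =
      (∫ s in (0 : ℝ)..τ, strangProduct X Y s) + ∫ s in (0 : ℝ)..τ, L * strangDefect X Y s := by
  have hcont : Continuous fun s => (X + Y) * strangProduct X Y s + strangDefect X Y s :=
    (continuous_const.mul (continuous_strangProduct X Y)).add (continuous_strangDefect X Y)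
  have hFTC := integral_eq_sub_of_hasDerivAt (fun s _ => hasDerivAt_strangProduct X Y s)
    (hcont.intervalIntegrable 0 τ)
  rw [strangProduct_zero] at hFTC
  have hmul := (ContinuousLinearMap.mul ℝ 𝔸 L).intervalIntegral_comp_comm
    (hcont.intervalIntegrable (μ := volume) 0 τ)
  simp only [ContinuousLinearMap.mul_apply', mul_add, ← mul_assoc, hL, one_mul] at hmul
  rw [← hFTC, ← hmul]
  exact integral_add ((continuous_strangProduct X Y).intervalIntegrable 0 τ)
    ((continuous_const.mul (continuous_strangDefect X Y)).intervalIntegrable 0 τ)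

theorem norm_mul_strangProduct_sub_one_sub_integral_le {L : 𝔸} (hL : L * (X + Y) = 1) {C : ℝ}
    (hLC : ‖L‖ ≤ C) (hX : ∀ t : ℝ, 0 ≤ t → ‖exp (t • X)‖ ≤ 1)
    (hY : ∀ t : ℝ, 0 ≤ t → ‖exp (t • Y)‖ ≤ 1) {τ : ℝ} (hτ : 0 ≤ τ) :
    ‖L * (strangProduct X Y τ - 1) - ∫ s in (0 : ℝ)..τ, strangProduct X Y s‖ ≤
      C * τ ^ 2 / 2 * ‖X * Y - Y * X‖ := by
  rw [mul_strangProduct_sub_one X Y hL, add_sub_cancel_left]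
  have hbound (s : ℝ) (hs : s ∈ Set.Ioc 0 τ) :
      ‖L * strangDefect X Y s‖ ≤ C * ‖X * Y - Y * X‖ * s := by
    rw [mul_right_comm]
    exact norm_mul_le_of_le hLC (norm_strangDefect_le X Y hX hY hs.1.le) |>.trans_eq (by ring)
  calc ‖∫ s in (0 : ℝ)..τ, L * strangDefect X Y s‖
      ≤ ∫ s in (0 : ℝ)..τ, C * ‖X * Y - Y * X‖ * s :=
        norm_integral_le_of_norm_le hτ (Filter.Eventually.of_forall hbound)
          ((continuous_const.mul continuous_id).intervalIntegrable 0 τ)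
    _ = C * τ ^ 2 / 2 * ‖X * Y - Y * X‖ := by
        rw [intervalIntegral.integral_const_mul, integral_id]
        ring

end StrangSplitting

namespace Matrix

def IsMetzler {ι : Type*} (A : Matrix ι ι ℝ) : Prop :=
  ∀ i j, i ≠ j → 0 ≤ A i j

theorem IsMetzler.smul {ι : Type*} {A : Matrix ι ι ℝ} (hA : A.IsMetzler) {t : ℝ} (ht : 0 ≤ t) :
    (t • A).IsMetzler :=
  fun i j hij => mul_nonneg ht (hA i j hij)

theorem mul_apply_nonneg {l m o α : Type*} [Fintype m] [Semiring α] [PartialOrder α]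
    [IsOrderedRing α] {A : Matrix l m α} {B : Matrix m o α} (hA : ∀ i j, 0 ≤ A i j)
    (hB : ∀ i j, 0 ≤ B i j) (i : l) (j : o) : 0 ≤ (A * B) i j :=
  Finset.sum_nonneg fun k _ => mul_nonneg (hA i k) (hB k j)

variable {ι : Type*} [Fintype ι] [DecidableEq ι]

theorem exp_apply_nonneg_of_nonneg {A : Matrix ι ι ℝ} (hA : ∀ i j, 0 ≤ A i j) (i j : ι) :
    0 ≤ exp A i j :=
  (Pi.hasSum.1 (Pi.hasSum.1 (exp_series_hasSum_exp' (𝕂 := ℝ) A) i) j).nonneg fun k =>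
    mul_nonneg (by positivity) (pow_apply_nonneg hA k i j)

theorem IsMetzler.exp_apply_nonneg {A : Matrix ι ι ℝ} (hA : A.IsMetzler) (i j : ι) :
    0 ≤ exp A i j := by
  set c : ℝ := ∑ k, |A k k|
  have hshift : ∀ i j, 0 ≤ (A + c • 1) i j := by
    intro i j
    rcases eq_or_ne i j with rfl | hij
    · have hc : |A i i| ≤ c :=
        Finset.single_le_sum (fun k _ => abs_nonneg (A k k)) (Finset.mem_univ i)
      simp only [add_apply, smul_apply, one_apply_eq, smul_eq_mul, mul_one]
      linarith [neg_abs_le (A i i)]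
    · simpa [one_apply_ne hij] using hA i j hij
  have hexp : exp (A + c • 1) = Real.exp c • exp A := by
    rw [Matrix.exp_add_of_commute _ _ ((Commute.one_right A).smul_right c),
      ← Algebra.algebraMap_eq_smul_one]
    -- `algebraMap_exp_comm` sees the matrices through `linftyOpNormedRing`, the goal through
    -- `Matrix`'s own ring and topology: the two agree only up to unfolding
    erw [← algebraMap_exp_comm]
    rw [← Real.exp_eq_exp_ℝ, Algebra.algebraMap_eq_smul_one, mul_smul_comm, mul_one]
  have := exp_apply_nonneg_of_nonneg hshift i j
  rw [hexp, smul_apply, smul_eq_mul] at this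
  exact (mul_nonneg_iff_of_pos_left (Real.exp_pos c)).1 this

theorem intervalIntegral_apply_nonneg {f : ℝ → Matrix ι ι ℝ} (hf : Continuous f) {a b : ℝ}
    (hab : a ≤ b) (hnonneg : ∀ s ∈ Set.Icc a b, ∀ i j, 0 ≤ f s i j) (i j : ι) :
    0 ≤ (∫ s in a..b, f s) i j := by
  let entry : Matrix ι ι ℝ →L[ℝ] ℝ := (entryLinearMap ℝ ℝ i j).toContinuousLinearMap
  have h : ∫ s in a..b, entry (f s) = entry (∫ s in a..b, f s) :=
    entry.intervalIntegral_comp_comm (hf.intervalIntegrable a b)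
  change 0 ≤ entry (∫ s in a..b, f s)
  rw [← h]
  exact integral_nonneg hab fun s hs => hnonneg s hs i j

theorem IsMetzler.strangProduct_apply_nonneg {X Y : Matrix ι ι ℝ} (hX : X.IsMetzler)
    (hY : Y.IsMetzler) {s : ℝ} (hs : 0 ≤ s) (i j : ι) :
    0 ≤ strangProduct X Y s i j := by
  have hs₂ : 0 ≤ s / 2 := by positivity
  exact mul_apply_nonneg (mul_apply_nonneg (hX.smul hs₂).exp_apply_nonneg
    (hY.smul hs).exp_apply_nonneg) (hX.smul hs₂).exp_apply_nonneg i j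

end Matrix

/-- Positivity of the split propagator increment: with `M = M_x + M_y` Metzler, the splitting
`Φ(τ) = e^{(τ/2)M_x} e^{τM_y} e^{(τ/2)M_x}` satisfies
`M⁻¹(Φ(τ) − I) = ∫₀^τ E₁(s)E₂(s)E₁(s) ds + R(τ)` where the integral term is entrywise
nonnegative and `‖R(τ)‖_∞ ≤ (C τ²/2)‖[M_x,M_y]‖_∞`; consequently, if `[M_x,M_y] = 0` then
`M⁻¹(Φ(τ) − I)` is entrywise nonnegative for all `τ ≥ 0`. -/
theorem stmt_19 {n : ℕ} (Mx My : Matrix (Fin n) (Fin n) ℝ)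
    (hMx : ∀ i j, i ≠ j → 0 ≤ Mx i j) (hMy : ∀ i j, i ≠ j → 0 ≤ My i j)
    (M : Matrix (Fin n) (Fin n) ℝ) (hM : M = Mx + My) (hMunit : IsUnit M.det)
    (C : ℝ) (hC : ‖M⁻¹‖ ≤ C)
    (hcx : ∀ t : ℝ, 0 ≤ t → ‖exp (t • Mx)‖ ≤ 1)
    (hcy : ∀ t : ℝ, 0 ≤ t → ‖exp (t • My)‖ ≤ 1)
    (E₁ E₂ : ℝ → Matrix (Fin n) (Fin n) ℝ)
    (hE₁ : ∀ s, E₁ s = exp ((s / 2) • Mx)) (hE₂ : ∀ s, E₂ s = exp (s • My))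
    (Φ : ℝ → Matrix (Fin n) (Fin n) ℝ)
    (hΦ : ∀ τ, Φ τ = exp ((τ / 2) • Mx) * exp (τ • My) * exp ((τ / 2) • Mx)) :
    (∃ R : ℝ → Matrix (Fin n) (Fin n) ℝ, ∀ τ : ℝ, 0 ≤ τ →
      M⁻¹ * (Φ τ - 1) = (∫ s in (0 : ℝ)..τ, E₁ s * E₂ s * E₁ s) + R τ ∧
      (∀ i j, 0 ≤ (∫ s in (0 : ℝ)..τ, E₁ s * E₂ s * E₁ s) i j) ∧
      ‖R τ‖ ≤ C * τ ^ 2 / 2 * ‖Mx * My - My * Mx‖) ∧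
    (Mx * My - My * Mx = 0 → ∀ τ : ℝ, 0 ≤ τ → ∀ i j, 0 ≤ (M⁻¹ * (Φ τ - 1)) i j) := by
  have hF : (fun s => E₁ s * E₂ s * E₁ s) = strangProduct Mx My :=
    funext fun s => by rw [hE₁, hE₂]; rfl
  obtain rfl : Φ = strangProduct Mx My := funext hΦ
  have hL : M⁻¹ * (Mx + My) = 1 := hM ▸ M.nonsing_inv_mul hMunit
  have hremainder (τ : ℝ) (hτ : 0 ≤ τ) :=
    norm_mul_strangProduct_sub_one_sub_integral_le Mx My hL hC hcx hcy hτ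
  have hintegral (τ : ℝ) (hτ : 0 ≤ τ) :
      ∀ i j, 0 ≤ (∫ s in (0 : ℝ)..τ, strangProduct Mx My s) i j :=
    Matrix.intervalIntegral_apply_nonneg (continuous_strangProduct Mx My) hτ fun s hs =>
      Matrix.IsMetzler.strangProduct_apply_nonneg hMx hMy hs.1
  rw [hF]
  refine ⟨⟨fun τ => M⁻¹ * (strangProduct Mx My τ - 1) - ∫ s in (0 : ℝ)..τ, strangProduct Mx My s,
    fun τ hτ => ⟨(add_sub_cancel _ _).symm, hintegral τ hτ, hremainder τ hτ⟩⟩,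
    fun hcomm τ hτ => ?_⟩
  have hexact := hremainder τ hτ
  rw [hcomm, norm_zero, mul_zero, norm_le_zero_iff, sub_eq_zero] at hexact
  exact hexact ▸ hintegral τ hτ
end
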